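/- arXiv:2001.00181 — 2 statements merged into one kernel-verified Lean document; each statement's English description precedes it below -/
import Mathlib

section
/- For any finite simple graph G with edge set E(G), the chromatic symmetric function satisfies X_G = Σ_{S ⊆ E(G)} (−1)^{|S|} p_{λ(S)}, where λ(S) is the partition of |V(G)| whose parts are the orders of the connected components of the spanning subgraph (V(G), S), and p_λ = Π_i p_{λ_i} is the product of power sum symmetric functions. -/
open Finset MvPolynomial

/-- The chromatic symmetric function of `G`, realized in `N` variables. -/
noncomputable def csf {V : Type} [Fintype V] (G : SimpleGraph V) (N : ℕ) :
    MvPolynomial (Fin N) ℤ := by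
  classical
  exact ∑ κ ∈ Finset.univ.filter
      (fun κ : V → Fin N => ∀ u v : V, G.Adj u v → κ u ≠ κ v),
    ∏ v : V, X (κ v)

/-- A semistandard filling of the Young diagram `D` with entries in `Fin N`:
rows weakly increase (left to right) and columns strictly increase (top to bottom). -/
def IsSSYTof (D : YoungDiagram) (N : ℕ) (T : D.cells → Fin N) : Prop :=
  (∀ c d : D.cells, (c : ℕ × ℕ).1 = (d : ℕ × ℕ).1 → (c : ℕ × ℕ).2 ≤ (d : ℕ × ℕ).2 →
      T c ≤ T d) ∧
  (∀ c d : D.cells, (c : ℕ × ℕ).2 = (d : ℕ × ℕ).2 → (c : ℕ × ℕ).1 < (d : ℕ × ℕ).1 →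
      T c < T d)

/-- The Schur polynomial of shape `D` in `N` variables, as the sum of content
monomials over all semistandard Young tableaux of shape `D` with entries in `Fin N`. -/
noncomputable def schurShape (N : ℕ) (D : YoungDiagram) : MvPolynomial (Fin N) ℤ := by
  classical
  exact ∑ T ∈ Finset.univ.filter (fun T : D.cells → Fin N => IsSSYTof D N T),
    ∏ c : D.cells, X (T c)

/-- The Young diagram of a partition. -/
def diagramOf {n : ℕ} (μ : n.Partition) : YoungDiagram :=
  YoungDiagram.ofRowLens (μ.parts.sort (· ≥ ·)) (List.sortedGE_iff_pairwise.mpr (μ.parts.pairwise_sort (· ≥ ·)))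

/-- The Schur polynomial `s_μ` in `N` variables. -/
noncomputable def schur (N : ℕ) {n : ℕ} (μ : n.Partition) : MvPolynomial (Fin N) ℤ :=
  schurShape N (diagramOf μ)

/-- A graph is Schur positive if its chromatic symmetric function, realized in any
number `N ≥ |V(G)|` of variables, is a nonnegative linear combination of the Schur
polynomials `s_λ`, `λ ⊢ |V(G)|`. -/
def SchurPositive {V : Type} [Fintype V] (G : SimpleGraph V) : Prop :=
  ∀ N : ℕ, Fintype.card V ≤ N →
    ∃ c : (Fintype.card V).Partition → ℤ,
      (∀ μ, 0 ≤ c μ) ∧ csf G N = ∑ μ, c μ • schur N μ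

/-- A graph is e-positive if its chromatic symmetric function, realized in any
number `N ≥ |V(G)|` of variables, is a nonnegative linear combination of the
polynomials `e_λ`, `λ ⊢ |V(G)|`. -/
def EPositive {V : Type} [Fintype V] (G : SimpleGraph V) : Prop :=
  ∀ N : ℕ, Fintype.card V ≤ N →
    ∃ c : (Fintype.card V).Partition → ℤ,
      (∀ μ, 0 ≤ c μ) ∧ csf G N = ∑ μ, c μ • esymmPart (Fin N) ℤ μ

/-- A stable (independent) set of vertices. -/
def IsStableSet {V : Type} (G : SimpleGraph V) (b : Finset V) : Prop :=
  ∀ u ∈ b, ∀ v ∈ b, ¬ G.Adj u v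

/-- A stable partition of `G`: a set partition of the vertex set all of whose
blocks are stable. -/
def IsStablePartition {V : Type} [Fintype V] [DecidableEq V] (G : SimpleGraph V)
    (P : Finpartition (Finset.univ : Finset V)) : Prop :=
  ∀ b ∈ P.parts, IsStableSet G b

/-- The type of a set partition: the multiset of its block sizes. -/
def typeOf {V : Type} [Fintype V] [DecidableEq V]
    (P : Finpartition (Finset.univ : Finset V)) : Multiset ℕ :=
  P.parts.val.map Finset.card
/-- The power sum symmetric polynomial `p_λ = Π_i p_{λ_i}` in `N` variables, for a
multiset `λ` of positive integers. -/
noncomputable def pMult (N : ℕ) (μ : Multiset ℕ) : MvPolynomial (Fin N) ℤ :=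
  (μ.map (psum (Fin N) ℤ)).prod

/-- The multiset of the orders of the connected components of a graph `H`. -/
noncomputable def compSizes {V : Type} [Fintype V] (H : SimpleGraph V) : Multiset ℕ := by
  classical
  exact ((Finset.univ.image fun v : V =>
    Finset.univ.filter fun u : V => H.Reachable v u).val).map Finset.card

/-! A colouring is proper iff no edge of `G` is monochromatic, so inclusion–exclusion over the
edges gives `X_G = Σ_S (-1)^|S| Σ_κ x^κ`, the inner sum over colourings monochromatic on every
edge of `S`. Those are exactly the colourings constant on the connected components of `(V, S)`,
i.e. colourings of the components, and summing over them factors as `Π_c p_{|c|}`. -/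

namespace SimpleGraph

theorem forall_adj_ne_iff_forall_edgeSet {V β : Type*} (G : SimpleGraph V) (κ : V → β) :
    (∀ u v, G.Adj u v → κ u ≠ κ v) ↔ ∀ e ∈ G.edgeSet, ¬ (e.map κ).IsDiag := by
  refine ⟨fun h e he => ?_, fun h u v huv => ?_⟩
  · induction e using Sym2.ind with
    | _ u v => simpa using h u v he
  · simpa using h s(u, v) huv

theorem forall_fromEdgeSet_adj_eq_iff {V β : Type*} (s : Set (Sym2 V)) (κ : V → β) :
    (∀ u v, (fromEdgeSet s).Adj u v → κ u = κ v) ↔ ∀ e ∈ s, (e.map κ).IsDiag := by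
  refine ⟨fun h e he => ?_, fun h u v huv => ?_⟩
  · induction e using Sym2.ind with
    | _ u v =>
      by_cases huv : u = v
      · exact Sym2.IsDiag.map (Sym2.mk_isDiag_iff.2 huv)
      · simpa using h u v ((fromEdgeSet_adj s).2 ⟨he, huv⟩)
  · simpa using h s(u, v) ((fromEdgeSet_adj s).1 huv).1

theorem Reachable.eq_of_forall_adj {V β : Type*} {G : SimpleGraph V} {κ : V → β}
    (h : ∀ u v, G.Adj u v → κ u = κ v) {u v : V} (huv : G.Reachable u v) : κ u = κ v := by
  obtain ⟨w⟩ := huv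
  induction w with
  | nil => rfl
  | cons ha _ ih => exact (h _ _ ha).trans ih

section
variable {V : Type} [Fintype V] (H : SimpleGraph V) [Fintype H.ConnectedComponent]

theorem sum_comp_connectedComponentMk [DecidableEq V] [DecidableRel H.Adj]
    [DecidableEq H.ConnectedComponent] {σ M : Type*} [Fintype σ] [DecidableEq σ]
    [AddCommMonoid M] (f : (V → σ) → M) :
    ∑ g : H.ConnectedComponent → σ, f (g ∘ H.connectedComponentMk) =
      ∑ κ with ∀ u v, H.Adj u v → κ u = κ v, f κ := by
  have hinj : Function.Injective fun g : H.ConnectedComponent → σ => g ∘ H.connectedComponentMk :=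
    Quot.mk_surjective.injective_comp_right
  rw [← sum_image fun g _ g' _ h => hinj h]
  refine sum_congr (Finset.ext fun κ => ?_) fun _ _ => rfl
  simp only [mem_image, mem_univ, true_and, mem_filter]
  refine ⟨?_, fun h => ⟨Quot.lift κ fun _ _ => Reachable.eq_of_forall_adj h, rfl⟩⟩
  rintro ⟨g, rfl⟩ u v huv
  exact congrArg g (ConnectedComponent.connectedComponentMk_eq_of_adj huv)

theorem sum_prod_X_comp_connectedComponentMk [DecidableEq H.ConnectedComponent] {σ R : Type*}
    [Fintype σ] [CommSemiring R] :
    ∑ g : H.ConnectedComponent → σ, ∏ v, (X (g (H.connectedComponentMk v)) : MvPolynomial σ R) =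
      ∏ c : H.ConnectedComponent, psum σ R c.supp.ncard := by
  have hfib : ∀ g : H.ConnectedComponent → σ,
      ∏ v, (X (g (H.connectedComponentMk v)) : MvPolynomial σ R) =
        ∏ c, X (g c) ^ c.supp.ncard := fun g => by
    rw [← Fintype.prod_fiberwise' H.connectedComponentMk (fun c => (X (g c) : MvPolynomial σ R))]
    refine prod_congr rfl fun c _ => ?_
    rw [prod_const, card_univ, ← Nat.card_eq_fintype_card, ← Nat.card_coe_set_eq]
    rfl
  simp_rw [hfib, psum, prod_univ_sum, Fintype.piFinset_univ]

theorem compSizes_eq_map_ncard_supp :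
    compSizes H = (univ : Finset H.ConnectedComponent).val.map fun c => c.supp.ncard := by
  classical
  have hblock : (fun v => ({u | H.Reachable v u} : Finset V)) =
      (fun c : H.ConnectedComponent => c.supp.toFinset) ∘ H.connectedComponentMk := by
    ext v u
    simp [ConnectedComponent.eq, reachable_comm]
  have hinj : Set.InjOn (fun c : H.ConnectedComponent => c.supp.toFinset)
      (univ : Finset H.ConnectedComponent) :=
    fun c _ d _ h => ConnectedComponent.supp_injective (Set.toFinset_inj.1 h)
  rw [compSizes, hblock, ← image_image,
    image_univ_of_surjective (f := H.connectedComponentMk) Quot.mk_surjective,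
    image_val_of_injOn hinj, Multiset.map_map]
  simp [Set.ncard_eq_toFinset_card']

theorem pMult_compSizes (N : ℕ) :
    pMult N (compSizes H) = ∏ c : H.ConnectedComponent, psum (Fin N) ℤ c.supp.ncard := by
  rw [pMult, compSizes_eq_map_ncard_supp, Multiset.map_map, prod_eq_multiset_prod]
  rfl

theorem sum_prod_X_monochromatic_eq_pMult [DecidableEq V] (N : ℕ) (s : Finset (Sym2 V)) :
    ∑ κ : V → Fin N with ∀ e ∈ s, (e.map κ).IsDiag, ∏ v, (X (κ v) : MvPolynomial (Fin N) ℤ) =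
      pMult N (compSizes (fromEdgeSet (s : Set (Sym2 V)))) := by
  classical
  calc ∑ κ : V → Fin N with ∀ e ∈ s, (e.map κ).IsDiag, ∏ v, (X (κ v) : MvPolynomial (Fin N) ℤ)
      = ∑ κ : V → Fin N with ∀ u v, (fromEdgeSet (s : Set (Sym2 V))).Adj u v → κ u = κ v,
          ∏ v, X (κ v) :=
        sum_congr (filter_congr fun κ _ => (forall_fromEdgeSet_adj_eq_iff _ κ).symm)
          fun _ _ => rfl
    _ = ∑ g : (fromEdgeSet (s : Set (Sym2 V))).ConnectedComponent → Fin N,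
          ∏ v, X (g (connectedComponentMk _ v)) :=
        (sum_comp_connectedComponentMk _ fun κ => ∏ v, X (κ v)).symm
    _ = _ := by rw [sum_prod_X_comp_connectedComponentMk, pMult_compSizes]

end

end SimpleGraph

open SimpleGraph

theorem csf_eq_sum_edge_subsets_general {V : Type} [Fintype V]
    (G : SimpleGraph V) [DecidableRel G.Adj] (N : ℕ) :
    csf G N = ∑ S ∈ G.edgeFinset.powerset,
      (-1 : ℤ) ^ S.card •
        pMult N (compSizes (SimpleGraph.fromEdgeSet (S : Set (Sym2 V)))) := by
  classical
  let mono (e : Sym2 V) : Finset (V → Fin N) := {κ | (e.map κ).IsDiag}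
  have hproper : csf G N = ∑ κ ∈ G.edgeFinset.inf fun e => (mono e)ᶜ, ∏ v, X (κ v) := by
    rw [csf]
    refine sum_congr (Finset.ext fun κ => ?_) fun _ _ => rfl
    simp [mono, mem_inf, forall_adj_ne_iff_forall_edgeSet]
  have hmono (S : Finset (Sym2 V)) :
      S.inf mono = ({κ | ∀ e ∈ S, (e.map κ).IsDiag} : Finset (V → Fin N)) := by
    ext κ
    simp [mono, mem_inf]
  rw [hproper, inclusion_exclusion_sum_inf_compl]
  refine sum_congr rfl fun S _ => ?_
  rw [hmono, sum_prod_X_monochromatic_eq_pMult]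

/-- **Theorem (Stanley).** `X_G = Σ_{S ⊆ E(G)} (−1)^{|S|} p_{λ(S)}`, where `λ(S)`
is the partition of `|V(G)|` whose parts are the orders of the connected components
of the spanning subgraph `(V(G), S)`. -/
theorem csf_eq_sum_edge_subsets {V : Type} [Fintype V] [DecidableEq V]
    (G : SimpleGraph V) [DecidableRel G.Adj] (N : ℕ) (hN : Fintype.card V ≤ N) :
    csf G N = ∑ S ∈ G.edgeFinset.powerset,
      (-1 : ℤ) ^ S.card •
        pMult N (compSizes (SimpleGraph.fromEdgeSet (S : Set (Sym2 V)))) :=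
  csf_eq_sum_edge_subsets_general G N
end

section
/- Every Schur positive connected bipartite finite simple graph on at least 2 vertices has a balanced stable bipartition, i.e., a partition of its vertex set into two stable sets whose cardinalities differ by at most 1. -/
open Finset MvPolynomial

/-!
Let `(A, B)` be the stable bipartition of a connected graph, with `|A| ≥ |B| + 2`. The only proper
colorings with the two colours `0 < 1` are the colorings by the two parts, so the monomial
`x₀^|A| x₁^|B|` occurs in `X_G` while `x₀^(|A|-1) x₁^(|B|+1)` does not. In a Schur expansion with
nonnegative coefficients, some `s_μ` with positive coefficient then has a tableau of content
`(|A|, |B|)`; turning the rightmost `0` of that tableau into a `1` gives one of content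
`(|A|-1, |B|+1)`, so the second monomial occurs in `X_G` after all.
-/

section Content

variable {α σ : Type} [Fintype α]

noncomputable def content (f : α → σ) : σ →₀ ℕ := ∑ a, Finsupp.single (f a) 1

theorem content_apply [DecidableEq σ] (f : α → σ) (i : σ) : content f i = #{a | f a = i} := by
  simp only [content, Finsupp.finsetSum_apply, Finsupp.single_apply, card_filter]

theorem apply_mem_support_content (f : α → σ) (a : α) : f a ∈ (content f).support := by
  classical
  rw [Finsupp.mem_support_iff, content_apply]
  exact card_ne_zero.mpr ⟨a, by simp⟩

theorem eq_or_eq_of_content_eq {f : α → σ} {i j : σ} {p q : ℕ}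
    (hf : content f = Finsupp.single i p + Finsupp.single j q) (a : α) : f a = i ∨ f a = j := by
  classical
  have := Finsupp.support_add (hf ▸ apply_mem_support_content f a)
  simpa using (mem_union.1 this).imp (Finsupp.support_single_subset ·)
    (Finsupp.support_single_subset ·)

theorem content_eq_single_add_single [DecidableEq σ] {f : α → σ} {i j : σ} (hij : i ≠ j)
    (hf : ∀ a, f a = i ∨ f a = j) :
    content f = Finsupp.single i #{a | f a = i} + Finsupp.single j #{a | f a = j} := by
  have hne : univ.filter (fun a => ¬ f a = i) = univ.filter (fun a => f a = j) := by
    ext a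
    rcases hf a with h | h <;> simp [h, hij, hij.symm]
  have hfiber (k : σ) : ∑ a ∈ univ.filter (fun a => f a = k), Finsupp.single (f a) 1 =
      Finsupp.single k #{a | f a = k} := by
    rw [sum_congr rfl fun a ha => by rw [(mem_filter.1 ha).2]]
    simp
  rw [content, ← sum_filter_add_sum_filter_not univ (fun a => f a = i), hne, hfiber, hfiber]

theorem content_update_add [DecidableEq α] (f : α → σ) (a : α) (s : σ) :
    content (Function.update f a s) + Finsupp.single (f a) 1 = content f + Finsupp.single s 1 := by
  have hsplit (g : α → σ) :
      content g = Finsupp.single (g a) 1 + ∑ b ∈ univ.erase a, Finsupp.single (g b) 1 :=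
    (add_sum_erase _ _ (mem_univ a)).symm
  rw [hsplit, hsplit f, Function.update_self,
    sum_congr rfl fun b hb => by rw [Function.update_of_ne (ne_of_mem_erase hb)]]
  abel

theorem prod_X_eq_monomial_content {R : Type} [CommSemiring R] (f : α → σ) :
    ∏ a, (X (f a) : MvPolynomial σ R) = monomial (content f) 1 := by
  rw [content, monomial_sum_one]
  rfl

theorem coeff_sum_prod_X {R : Type} [CommSemiring R] [DecidableEq σ] (s : Finset (α → σ))
    (m : σ →₀ ℕ) :
    coeff m (∑ f ∈ s, ∏ a, (X (f a) : MvPolynomial σ R)) = #{f ∈ s | content f = m} := by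
  simp_rw [coeff_sum, prod_X_eq_monomial_content, coeff_monomial, sum_boole]

theorem coeff_sum_prod_X_nonneg (s : Finset (α → σ)) (m : σ →₀ ℕ) :
    0 ≤ coeff m (∑ f ∈ s, ∏ a, (X (f a) : MvPolynomial σ ℤ)) := by
  classical
  rw [coeff_sum_prod_X]
  exact Nat.cast_nonneg _

theorem coeff_sum_prod_X_pos_iff (s : Finset (α → σ)) (m : σ →₀ ℕ) :
    0 < coeff m (∑ f ∈ s, ∏ a, (X (f a) : MvPolynomial σ ℤ)) ↔ ∃ f ∈ s, content f = m := by
  classical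
  rw [coeff_sum_prod_X, Nat.cast_pos, card_pos, filter_nonempty_iff]

end Content

def IsProperColoring {V α : Type} (G : SimpleGraph V) (κ : V → α) : Prop :=
  ∀ u v, G.Adj u v → κ u ≠ κ v

theorem coeff_csf_pos_iff {V : Type} [Fintype V] (G : SimpleGraph V) {N : ℕ} (m : Fin N →₀ ℕ) :
    0 < coeff m (csf G N) ↔ ∃ κ, IsProperColoring G κ ∧ content κ = m := by
  rw [csf, coeff_sum_prod_X_pos_iff]
  simp [IsProperColoring]

theorem coeff_schurShape_nonneg (N : ℕ) (D : YoungDiagram) (m : Fin N →₀ ℕ) :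
    0 ≤ coeff m (schurShape N D) := by
  rw [schurShape]
  exact coeff_sum_prod_X_nonneg _ m

theorem coeff_schurShape_pos_iff (N : ℕ) (D : YoungDiagram) (m : Fin N →₀ ℕ) :
    0 < coeff m (schurShape N D) ↔ ∃ T, IsSSYTof D N T ∧ content T = m := by
  rw [schurShape, coeff_sum_prod_X_pos_iff]
  simp

theorem SchurPositive.exists_coloring_of_exists_ssyt_imp {V : Type} [Fintype V]
    {G : SimpleGraph V} (hG : SchurPositive G) {N : ℕ} (hN : Fintype.card V ≤ N)
    {m m' : Fin N →₀ ℕ}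
    (hmove : ∀ μ : (Fintype.card V).Partition,
      (∃ T, IsSSYTof (diagramOf μ) N T ∧ content T = m) →
        ∃ T, IsSSYTof (diagramOf μ) N T ∧ content T = m')
    (hm : ∃ κ, IsProperColoring G κ ∧ content κ = m) :
    ∃ κ, IsProperColoring G κ ∧ content κ = m' := by
  obtain ⟨c, hc, hX⟩ := hG N hN
  simp only [← coeff_csf_pos_iff, hX, coeff_sum, coeff_smul, smul_eq_mul] at hm ⊢
  obtain ⟨μ, -, hμ⟩ := exists_lt_of_sum_lt (f := fun _ => (0 : ℤ)) (by simpa using hm)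
  have hK := coeff_schurShape_nonneg N (diagramOf μ)
  obtain ⟨hcμ, hKμ⟩ := (pos_and_pos_or_neg_and_neg_of_mul_pos hμ).resolve_right
    fun h => (hK m).not_gt h.2
  have hKμ' := (coeff_schurShape_pos_iff _ _ _).2 (hmove μ ((coeff_schurShape_pos_iff _ _ _).1 hKμ))
  calc 0 < c μ * coeff m' (schur N μ) := mul_pos hcμ hKμ'
    _ ≤ _ := single_le_sum (fun ν _ => mul_nonneg (hc ν) (coeff_schurShape_nonneg _ _ _))
      (mem_univ μ)

namespace IsSSYTof

variable {D : YoungDiagram} {N : ℕ} {T : D.cells → Fin N}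

theorem fst_eq_zero_of_forall_le (hT : IsSSYTof D N T) {i : Fin N} (hmin : ∀ c, i ≤ T c)
    {c : D.cells} (hc : T c = i) : c.1.1 = 0 := by
  by_contra hc₁
  obtain ⟨⟨x, y⟩, hmem⟩ := c
  have htop : ((0 : ℕ), y) ∈ D.cells := D.up_left_mem (Nat.zero_le x) le_rfl hmem
  exact (hmin ⟨_, htop⟩).not_gt (hc ▸ hT.2 ⟨_, htop⟩ ⟨(x, y), hmem⟩ rfl (Nat.pos_of_ne_zero hc₁))

/-- Moving each entry `i` one row down injects them into the larger entries. -/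
theorem card_eq_le_card_lt (hT : IsSSYTof D N T) {i : Fin N}
    (hrow : ∀ c, T c = i → c.1.1 = 0) {y₀ : ℕ} (hy₀ : (1, y₀) ∈ D)
    (hcol : ∀ c, T c = i → c.1.2 ≤ y₀) : #{c | T c = i} ≤ #{c | i < T c} := by
  rw [← card_map (Function.Embedding.subtype (· ∈ D.cells)) (s := {c | i < T c})]
  refine card_le_card_of_injOn (fun c => (1, c.1.2)) (fun c hc => ?_) (fun c hc d hd hcd => ?_)
  · rw [mem_coe, mem_filter_univ] at hc
    have hbelow : (1, c.1.2) ∈ D.cells := D.up_left_mem le_rfl (hcol c hc) hy₀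
    have hlt := hT.2 c ⟨_, hbelow⟩ rfl (by simp [hrow c hc])
    simp only [coe_map, Function.Embedding.subtype_apply, Set.mem_image, mem_coe, mem_filter_univ]
    exact ⟨⟨_, hbelow⟩, hc ▸ hlt, rfl⟩
  · rw [mem_coe, mem_filter_univ] at hc hd
    exact Subtype.ext (Prod.ext (by rw [hrow c hc, hrow d hd]) (congrArg Prod.snd hcd :))

theorem exists_content_single_add_single (hT : IsSSYTof D N T) {i j : Fin N} (hij : i < j)
    {a b : ℕ} (hba : b ≤ a)
    (hc : content T = Finsupp.single i (a + 1) + Finsupp.single j b) :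
    ∃ T', IsSSYTof D N T' ∧ content T' = Finsupp.single i a + Finsupp.single j (b + 1) := by
  have hvals := eq_or_eq_of_content_eq hc
  have hmin (c : D.cells) : i ≤ T c := (hvals c).elim ge_of_eq fun h => h ▸ hij.le
  have hrow (c : D.cells) : T c = i → c.1.1 = 0 := hT.fst_eq_zero_of_forall_le hmin
  have hi : #{c | T c = i} = a + 1 := by
    rw [← content_apply, hc]
    simp [hij.ne]
  have hj : #{c | i < T c} = b := by
    have : #{c | i < T c} = #{c | T c = j} := congrArg card <| filter_congr fun c _ => by
      rcases hvals c with h | h <;> simp [h, hij, hij.ne]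
    rw [this, ← content_apply, hc]
    simp [hij.ne]
  -- The rightmost entry `i` becomes `j`. No cell lies below it, or the second row would hold
  -- more than `b` entries `j`.
  obtain ⟨c₀, hc₀, hmax⟩ := exists_max_image {c | T c = i} (fun c => c.1.2)
    (card_pos.1 (by omega))
  rw [mem_filter_univ] at hc₀
  have hmax' (c : D.cells) (hc : T c = i) : c.1.2 ≤ c₀.1.2 := hmax c (by simpa using hc)
  have hbelow : (1, c₀.1.2) ∉ D := fun hmem => by
    have := hT.card_eq_le_card_lt hrow hmem hmax'
    omega
  have hle (c : D.cells) : Function.update T c₀ j c ≤ j := by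
    by_cases hc : c = c₀
    · simp [hc]
    · rcases hvals c with h | h <;> simp [hc, h, hij.le]
  refine ⟨Function.update T c₀ j, ⟨fun c d hcd hle' => ?_, fun c d hcd hlt => ?_⟩, ?_⟩
  · by_cases hd : d = c₀
    · rw [hd, Function.update_self]
      exact hle c
    by_cases hc : c = c₀
    · subst hc
      rw [Function.update_self, Function.update_of_ne hd]
      refine (hvals d).elim (fun hdi => absurd ?_ hd) ge_of_eq
      exact Subtype.ext (Prod.ext (by rw [hrow d hdi, hrow c hc₀]) (le_antisymm (hmax' d hdi) hle'))
    · rw [Function.update_of_ne hc, Function.update_of_ne hd]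
      exact hT.1 c d hcd hle'
  · have hd : d ≠ c₀ := by
      rintro rfl
      rw [hrow d hc₀] at hlt
      exact Nat.not_lt_zero _ hlt
    have hc : c ≠ c₀ := by
      rintro rfl
      have h1 : 1 ≤ d.1.1 := by omega
      exact hbelow (D.up_left_mem h1 hcd.le d.2)
    rw [Function.update_of_ne hc, Function.update_of_ne hd]
    exact hT.2 c d hcd hlt
  · have h := content_update_add T c₀ j
    rw [hc₀, hc] at h
    apply add_right_cancel (b := Finsupp.single i 1)
    rw [h, Finsupp.single_add, Finsupp.single_add]
    abel

end IsSSYTof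

section Bipartition

variable {V : Type} [Fintype V] [DecidableEq V] {G : SimpleGraph V}

def IsStableBipartition (G : SimpleGraph V) (A B : Finset V) : Prop :=
  Disjoint A B ∧ A ∪ B = univ ∧ IsStableSet G A ∧ IsStableSet G B

namespace IsStableBipartition

variable {A B : Finset V}

theorem symm (h : IsStableBipartition G A B) : IsStableBipartition G B A :=
  ⟨h.1.symm, union_comm A B ▸ h.2.1, h.2.2.2, h.2.2.1⟩

theorem mem_right_iff (h : IsStableBipartition G A B) {v : V} : v ∈ B ↔ v ∉ A :=
  ⟨fun hB hA => disjoint_left.1 h.1 hA hB,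
    fun hA => (mem_union.1 (h.2.1 ▸ mem_univ v)).resolve_left hA⟩

theorem mem_left_iff_of_adj (h : IsStableBipartition G A B) {u v : V} (huv : G.Adj u v) :
    u ∈ A ↔ v ∉ A :=
  ⟨fun hu hv => h.2.2.1 u hu v hv huv,
    fun hv => by_contra fun hu => h.2.2.2 u (h.mem_right_iff.2 hu) v (h.mem_right_iff.2 hv) huv⟩

theorem eq_or_eq_swap (hconn : G.Preconnected) {A' B' : Finset V} (h : IsStableBipartition G A B)
    (h' : IsStableBipartition G A' B') : (A' = A ∧ B' = B) ∨ (A' = B ∧ B' = A) := by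
  have hinv (u v : V) : (u ∈ A ↔ u ∈ A') ↔ (v ∈ A ↔ v ∈ A') := by
    obtain ⟨p⟩ := hconn u v
    induction p with
    | nil => rfl
    | cons huv _ ih =>
      have := h.mem_left_iff_of_adj huv
      have := h'.mem_left_iff_of_adj huv
      rw [← ih]
      tauto
  by_cases hsame : ∀ v, v ∈ A ↔ v ∈ A'
  · left
    constructor <;> ext v
    · exact (hsame v).symm
    · rw [h.mem_right_iff, h'.mem_right_iff, hsame]
  · right
    obtain ⟨u, hu⟩ := not_forall.1 hsame
    have hflip (v : V) : v ∈ A' ↔ v ∉ A := by have := hinv u v; tauto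
    constructor <;> ext v
    · rw [hflip, h.mem_right_iff]
    · rw [h'.mem_right_iff, hflip, not_not]

theorem isProperColoring_ite (h : IsStableBipartition G A B) {α : Type} {i j : α}
    (hij : i ≠ j) : IsProperColoring G fun v => if v ∈ A then i else j := by
  intro u v huv
  have := h.mem_left_iff_of_adj huv
  by_cases hu : u ∈ A <;> simp_all [hij.symm]

theorem content_ite (h : IsStableBipartition G A B) {α : Type} [DecidableEq α] {i j : α}
    (hij : i ≠ j) :
    content (fun v => if v ∈ A then i else j) = Finsupp.single i #A + Finsupp.single j #B := by
  rw [content_eq_single_add_single hij fun v => by by_cases hv : v ∈ A <;> simp [hv]]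
  congr <;> ext v <;> by_cases hv : v ∈ A <;> simp [hv, hij, hij.symm, h.mem_right_iff]

end IsStableBipartition

theorem isStableBipartition_fibers {α : Type} [DecidableEq α] {κ : V → α}
    (hκ : IsProperColoring G κ) {i j : α} (hij : i ≠ j) (hvals : ∀ v, κ v = i ∨ κ v = j) :
    IsStableBipartition G {v | κ v = i} {v | κ v = j} := by
  refine ⟨disjoint_filter.2 fun v _ hi hj => hij (hi ▸ hj), ?_, ?_, ?_⟩
  · ext v
    simpa using hvals v
  all_goals
    intro u hu v hv huv
    simp only [mem_filter_univ] at hu hv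
    exact hκ u v huv (hu.trans hv.symm)

end Bipartition

theorem card_le_card_add_one_of_schurPositive {V : Type} [Fintype V] [DecidableEq V]
    {G : SimpleGraph V} (hconn : G.Preconnected) (hG : SchurPositive G) {A B : Finset V}
    (h : IsStableBipartition G A B) : #A ≤ #B + 1 := by
  by_contra! hAB
  obtain ⟨a, ha⟩ : ∃ a, #A = a + 1 := ⟨#A - 1, by omega⟩
  have hn : 2 ≤ Fintype.card V := by have := card_le_univ A; omega
  let i : Fin (Fintype.card V) := ⟨0, by omega⟩
  let j : Fin (Fintype.card V) := ⟨1, by omega⟩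
  have hij : i < j := Fin.mk_lt_mk.2 zero_lt_one
  have hA : ∃ κ, IsProperColoring G κ ∧
      content κ = Finsupp.single i (a + 1) + Finsupp.single j #B :=
    ⟨_, h.isProperColoring_ite hij.ne, ha ▸ h.content_ite hij.ne⟩
  obtain ⟨κ, hκ, hcontent⟩ := hG.exists_coloring_of_exists_ssyt_imp le_rfl
    (fun μ ⟨T, hT, hc⟩ => hT.exists_content_single_add_single hij (by omega) hc) hA
  have hfib := isStableBipartition_fibers hκ hij.ne (eq_or_eq_of_content_eq hcontent)
  have hcard : #{v | κ v = i} = a := by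
    rw [← content_apply, hcontent]
    simp [hij.ne]
  rcases h.eq_or_eq_swap hconn hfib with ⟨hi, -⟩ | ⟨hi, -⟩ <;> rw [hi] at hcard <;> omega

theorem balanced_bipartition_of_schurPositive_general {V : Type} [Fintype V] [DecidableEq V]
    (G : SimpleGraph V) (hconn : G.Connected)
    (hbip : ∃ A B : Finset V, Disjoint A B ∧ A ∪ B = Finset.univ ∧
      IsStableSet G A ∧ IsStableSet G B)
    (hG : SchurPositive G) :
    ∃ A B : Finset V, Disjoint A B ∧ A ∪ B = Finset.univ ∧
      IsStableSet G A ∧ IsStableSet G B ∧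
      A.card ≤ B.card + 1 ∧ B.card ≤ A.card + 1 := by
  obtain ⟨A, B, h⟩ := hbip
  have h : IsStableBipartition G A B := h
  exact ⟨A, B, h.1, h.2.1, h.2.2.1, h.2.2.2,
    card_le_card_add_one_of_schurPositive hconn.preconnected hG h,
    card_le_card_add_one_of_schurPositive hconn.preconnected hG h.symm⟩

/-- **Theorem.** Every Schur positive connected bipartite graph on at least two
vertices has a balanced stable bipartition: a partition of the vertex set into two
stable sets whose cardinalities differ by at most `1`. -/
theorem balanced_bipartition_of_schurPositive {V : Type} [Fintype V] [DecidableEq V]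
    (G : SimpleGraph V) (hcard : 2 ≤ Fintype.card V) (hconn : G.Connected)
    (hbip : ∃ A B : Finset V, Disjoint A B ∧ A ∪ B = Finset.univ ∧
      IsStableSet G A ∧ IsStableSet G B)
    (hG : SchurPositive G) :
    ∃ A B : Finset V, Disjoint A B ∧ A ∪ B = Finset.univ ∧
      IsStableSet G A ∧ IsStableSet G B ∧
      A.card ≤ B.card + 1 ∧ B.card ≤ A.card + 1 :=
  balanced_bipartition_of_schurPositive_general G hconn hbip hG
end
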